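/- arXiv:1903.11310 — 3 statements merged into one kernel-verified Lean document; each statement's English description precedes it below -/
import Mathlib

section
/- Let w : ℝ → (0,∞) be continuous and let x ∈ L²_w(ℝ) be such that w·x is locally absolutely continuous on ℝ and its almost-everywhere derivative (w·x)′ belongs to L²_w(ℝ). Then the function w·x is bounded on ℝ; in fact |(w·x)(ξ)|² ≤ |(w·x)(0)|² + 2‖x‖_{L²_w(ℝ)}·‖(w·x)′‖_{L²_w(ℝ)} for every ξ ∈ ℝ. -/
/-!
Since `w·x` is locally absolutely continuous, `d/dξ |w·x|² = 2 Re((w·x)‾ (w·x)′)` almost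
everywhere, so `|(w·x)(ξ)|² - |(w·x)(0)|²` is bounded by `2 ∫ |w·x| |(w·x)′|`. Writing
`|w·x| |(w·x)′| = (√w |x|)(√w |(w·x)′|)`, the Cauchy–Schwarz inequality bounds this integral
by `‖x‖_{L²_w} ‖(w·x)′‖_{L²_w}`.
-/

open MeasureTheory Filter Set Topology

open scoped RealInnerProductSpace

section CauchySchwarz

variable {α E : Type*} [MeasurableSpace α] {μ : Measure α} [NormedAddCommGroup E]

theorem integral_mul_norm_le_sqrt_mul_sqrt {f g : α → E} (hf : MemLp f 2 μ) (hg : MemLp g 2 μ) :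
    ∫ a, ‖f a‖ * ‖g a‖ ∂μ ≤ √(∫ a, ‖f a‖ ^ 2 ∂μ) * √(∫ a, ‖g a‖ ^ 2 ∂μ) := by
  have h := integral_mul_norm_le_Lp_mul_Lq (μ := μ) Real.HolderConjugate.two_two
    (by simpa using hf) (by simpa using hg)
  simpa only [Real.rpow_two, Real.sqrt_eq_rpow, one_div] using h

theorem memLp_two_sqrt_mul_norm {w : α → ℝ} (hw : AEStronglyMeasurable w μ) (hw_nonneg : 0 ≤ w)
    {f : α → E} (hf : AEStronglyMeasurable f μ) (hwf : Integrable (fun a => w a * ‖f a‖ ^ 2) μ) :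
    MemLp (fun a => √(w a) * ‖f a‖) 2 μ := by
  have hmeas := (Real.continuous_sqrt.comp_aestronglyMeasurable hw).mul hf.norm
  refine (memLp_two_iff_integrable_sq hmeas).mpr (hwf.congr (.of_forall fun a => ?_))
  change _ = (√(w a) * ‖f a‖) ^ 2
  rw [mul_pow, Real.sq_sqrt (hw_nonneg a)]

theorem integrable_and_integral_weight_mul_norm_mul_norm_le {w : α → ℝ}
    (hw : AEStronglyMeasurable w μ) (hw_nonneg : 0 ≤ w) {f g : α → E}
    (hf : AEStronglyMeasurable f μ) (hg : AEStronglyMeasurable g μ)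
    (hwf : Integrable (fun a => w a * ‖f a‖ ^ 2) μ)
    (hwg : Integrable (fun a => w a * ‖g a‖ ^ 2) μ) :
    Integrable (fun a => w a * ‖f a‖ * ‖g a‖) μ ∧
      ∫ a, w a * ‖f a‖ * ‖g a‖ ∂μ ≤
        √(∫ a, w a * ‖f a‖ ^ 2 ∂μ) * √(∫ a, w a * ‖g a‖ ^ 2 ∂μ) := by
  have hF := memLp_two_sqrt_mul_norm hw hw_nonneg hf hwf
  have hG := memLp_two_sqrt_mul_norm hw hw_nonneg hg hwg
  have hFG : ∀ a, √(w a) * ‖f a‖ * (√(w a) * ‖g a‖) = w a * ‖f a‖ * ‖g a‖ := fun a => by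
    linear_combination ‖f a‖ * ‖g a‖ * Real.mul_self_sqrt (hw_nonneg a)
  have hsq : ∀ (h : α → E) a, (√(w a) * ‖h a‖) ^ 2 = w a * ‖h a‖ ^ 2 := fun h a => by
    rw [mul_pow, Real.sq_sqrt (hw_nonneg a)]
  refine ⟨(hF.integrable_mul hG).congr (.of_forall fun a => hFG a), ?_⟩
  have h := integral_mul_norm_le_sqrt_mul_sqrt hF hG
  simpa only [norm_mul, Real.norm_of_nonneg (Real.sqrt_nonneg _), norm_norm, hFG, hsq] using h

end CauchySchwarz

section Primitive

variable {a b : ℝ}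

theorem MeasureTheory.LocallyIntegrable.intervalIntegrable {E : Type*} [NormedAddCommGroup E]
    {f : ℝ → E} (hf : LocallyIntegrable f) (a b : ℝ) : IntervalIntegrable f volume a b :=
  (hf.integrableOn_isCompact isCompact_uIcc).intervalIntegrable

theorem absolutelyContinuousOnInterval_of_sub_eq_integral {f h : ℝ → ℝ}
    (hh : IntervalIntegrable h volume a b) (hf : ∀ t, f t - f a = ∫ s in a..t, h s) :
    AbsolutelyContinuousOnInterval f a b := by
  have hconst : AbsolutelyContinuousOnInterval (fun _ => f a) a b :=
    (LipschitzWith.const (f a)).lipschitzOnWith.absolutelyContinuousOnInterval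
  have hf' : f = (fun _ => f a) + fun t => ∫ s in a..t, h s := by
    ext t
    simp [← hf t]
  exact hf' ▸ hconst.add (hh.absolutelyContinuousOnInterval_intervalIntegral left_mem_uIcc)

theorem norm_sq_sub_norm_sq_eq_integral_inner {u g : ℝ → ℂ}
    (hg : LocallyIntegrable g) (hu : ∀ t, u t - u a = ∫ s in a..t, g s) :
    ‖u b‖ ^ 2 - ‖u a‖ ^ 2 = ∫ t in a..b, 2 * ⟪u t, g t⟫ := by
  have hgI := hg.intervalIntegrable a b
  have hre : AbsolutelyContinuousOnInterval (fun t => (u t).re) a b :=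
    absolutelyContinuousOnInterval_of_sub_eq_integral ⟨hgI.1.re, hgI.2.re⟩ fun t => by
      simpa using (congrArg Complex.re (hu t)).trans
        (intervalIntegral.intervalIntegral_re (hg.intervalIntegrable a t)).symm
  have him : AbsolutelyContinuousOnInterval (fun t => (u t).im) a b :=
    absolutelyContinuousOnInterval_of_sub_eq_integral ⟨hgI.1.im, hgI.2.im⟩ fun t => by
      simpa using (congrArg Complex.im (hu t)).trans
        (intervalIntegral.intervalIntegral_im (hg.intervalIntegrable a t)).symm
  have hnorm : AbsolutelyContinuousOnInterval (fun t => ‖u t‖ ^ 2) a b := by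
    have h : (fun t => ‖u t‖ ^ 2) = (fun t => (u t).re) * (fun t => (u t).re) +
        (fun t => (u t).im) * (fun t => (u t).im) := by
      ext t
      simp [Complex.sq_norm, Complex.normSq_apply]
    exact h ▸ (hre.mul hre).add (him.mul him)
  rw [← hnorm.integral_deriv_eq_sub]
  refine intervalIntegral.integral_congr_ae ?_
  filter_upwards [LocallyIntegrable.ae_hasDerivAt_integral hg] with t ht _
  have hu' : u = fun x => u a + ∫ s in a..x, g s := funext fun x => by rw [← hu x]; ring
  rw [hu']
  exact ((ht a).const_add (u a)).norm_sq.deriv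

theorem norm_sq_le_add_two_integral_norm_mul_norm {u g : ℝ → ℂ} (hg : LocallyIntegrable g)
    (hu : ∀ t, u t - u a = ∫ s in a..t, g s) (hug : Integrable fun t => ‖u t‖ * ‖g t‖) :
    ‖u b‖ ^ 2 ≤ ‖u a‖ ^ 2 + 2 * ∫ t, ‖u t‖ * ‖g t‖ := by
  have hnonneg : 0 ≤ fun t => 2 * (‖u t‖ * ‖g t‖) := fun t => by positivity
  have hinner : ∀ t, ‖2 * ⟪u t, g t⟫‖ ≤ 2 * (‖u t‖ * ‖g t‖) := fun t => by
    rw [norm_mul, Real.norm_two, Real.norm_eq_abs]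
    exact mul_le_mul_of_nonneg_left (abs_real_inner_le_norm _ _) zero_le_two
  calc ‖u b‖ ^ 2 = ‖u a‖ ^ 2 + ∫ t in a..b, 2 * ⟪u t, g t⟫ := by
        linarith [norm_sq_sub_norm_sq_eq_integral_inner (b := b) hg hu]
    _ ≤ ‖u a‖ ^ 2 + ∫ t in uIoc a b, ‖2 * ⟪u t, g t⟫‖ :=
        add_le_add le_rfl ((Real.le_norm_self _).trans
          intervalIntegral.norm_integral_le_integral_norm_uIoc)
    _ ≤ ‖u a‖ ^ 2 + ∫ t in uIoc a b, 2 * (‖u t‖ * ‖g t‖) :=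
        add_le_add le_rfl (integral_mono_of_nonneg (.of_forall fun t => norm_nonneg _)
          (hug.const_mul 2).integrableOn (.of_forall hinner))
    _ ≤ ‖u a‖ ^ 2 + ∫ t, 2 * (‖u t‖ * ‖g t‖) :=
        add_le_add le_rfl (setIntegral_le_integral (hug.const_mul 2) (.of_forall hnonneg))
    _ = ‖u a‖ ^ 2 + 2 * ∫ t, ‖u t‖ * ‖g t‖ := by rw [integral_const_mul]

end Primitive

/-- If `x ∈ L²_w(ℝ)` and `w·x` is locally absolutely continuous with a.e.
derivative `g = (w·x)' ∈ L²_w(ℝ)` (encoded via the fundamental theorem of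
calculus), then `w·x` is bounded, with the explicit bound
`|(w·x)(ξ)|² ≤ |(w·x)(0)|² + 2‖x‖_{L²_w}‖(w·x)'‖_{L²_w}`. -/
theorem stmt_1 (w : ℝ → ℝ) (hw_cont : Continuous w) (hw_pos : ∀ ξ, 0 < w ξ)
    (x g : ℝ → ℂ)
    (hx_meas : AEStronglyMeasurable x volume)
    (hx : Integrable fun ξ => w ξ * ‖x ξ‖ ^ 2)
    (hg_loc : LocallyIntegrable g)
    (hg : Integrable fun ξ => w ξ * ‖g ξ‖ ^ 2)
    (hFTC : ∀ a b : ℝ, (w b : ℂ) * x b - (w a : ℂ) * x a = ∫ ζ in a..b, g ζ) :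
    (∃ M : ℝ, ∀ ξ : ℝ, ‖(w ξ : ℂ) * x ξ‖ ≤ M) ∧
    ∀ ξ : ℝ, ‖(w ξ : ℂ) * x ξ‖ ^ 2 ≤ ‖(w 0 : ℂ) * x 0‖ ^ 2 +
      2 * Real.sqrt (∫ ζ, w ζ * ‖x ζ‖ ^ 2) * Real.sqrt (∫ ζ, w ζ * ‖g ζ‖ ^ 2) := by
  set u : ℝ → ℂ := fun ξ => (w ξ : ℂ) * x ξ
  have hnorm : ∀ ξ, ‖u ξ‖ * ‖g ξ‖ = w ξ * ‖x ξ‖ * ‖g ξ‖ := fun ξ => by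
    simp [u, abs_of_pos (hw_pos ξ)]
  obtain ⟨hint, hCS⟩ := integrable_and_integral_weight_mul_norm_mul_norm_le
    hw_cont.aestronglyMeasurable (fun ξ => (hw_pos ξ).le) hx_meas hg_loc.aestronglyMeasurable hx hg
  have hbound : ∀ ξ, ‖u ξ‖ ^ 2 ≤ ‖u 0‖ ^ 2 +
      2 * √(∫ ζ, w ζ * ‖x ζ‖ ^ 2) * √(∫ ζ, w ζ * ‖g ζ‖ ^ 2) := fun ξ => by
    have h := norm_sq_le_add_two_integral_norm_mul_norm (u := u) (b := ξ) hg_loc (hFTC 0)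
      (hint.congr (.of_forall fun ζ => (hnorm ζ).symm))
    simp only [hnorm] at h
    linarith
  exact ⟨⟨_, fun ξ => Real.le_sqrt_of_sq_le (hbound ξ)⟩, hbound⟩
end

section
/- Let w : ℝ → (0,∞) be continuous with 1/w not Lebesgue-integrable on (−∞,0) and not Lebesgue-integrable on (0,∞); let p_w(ξ) = ∫₀^ξ w(ζ)⁻¹ dζ and μ_w(ξ,t) = p_w⁻¹(p_w(ξ)+t) − ξ. Then the restriction of μ_w to ℝ × [0,∞) is partially continuously differentiable with ∂μ_w/∂ξ(ξ,t) = w(ξ + μ_w(ξ,t))/w(ξ) − 1 and ∂μ_w/∂t(ξ,t) = w(ξ + μ_w(ξ,t)) for all ξ ∈ ℝ and t ≥ 0; both partial derivatives are continuous. -/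
open MeasureTheory Filter Set Topology

/-- `p_w(ξ) = ∫₀^ξ w(ζ)⁻¹ dζ`. -/
noncomputable def pW (w : ℝ → ℝ) (ξ : ℝ) : ℝ := ∫ ζ in (0:ℝ)..ξ, (w ζ)⁻¹

/-- `μ_w(ξ,t) = p_w⁻¹(p_w(ξ) + t) − ξ`. -/
noncomputable def muW (w : ℝ → ℝ) (ξ t : ℝ) : ℝ :=
  Function.invFun (pW w) (pW w ξ + t) - ξ

/-!
Since `w > 0` is continuous, `p_w` is a strictly increasing `C¹` function with `p_w' = 1/w`, and
the non-integrability of `1/w` at both ends makes it tend to `±∞`, hence a bijection of `ℝ`.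
Its inverse is then continuous (it is an order isomorphism) and, by the inverse function rule,
differentiable with `(p_w⁻¹)'(y) = w(p_w⁻¹ y)`. Writing `ξ + μ_w(ξ,t) = p_w⁻¹(p_w ξ + t)`, both
partial derivatives follow from the chain rule, and they are continuous because `p_w` and
`p_w⁻¹` are.
-/

open Function

section StrictMonoInverse

theorem StrictMono.invFun_eq_orderIsoOfSurjective_symm {α β : Type*} [LinearOrder α]
    [LinearOrder β] [Nonempty α] {f : α → β} (hf : StrictMono f) (hsurj : Surjective f) :
    invFun f = (hf.orderIsoOfSurjective f hsurj).symm := by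
  funext y
  exact hf.injective ((rightInverse_invFun hsurj y).trans
    (hf.orderIsoOfSurjective_self_symm_apply f hsurj y).symm)

theorem StrictMono.continuous_invFun {α β : Type*} [LinearOrder α] [TopologicalSpace α]
    [OrderTopology α] [LinearOrder β] [TopologicalSpace β] [OrderTopology β] [Nonempty α]
    {f : α → β} (hf : StrictMono f) (hsurj : Surjective f) : Continuous (invFun f) := by
  rw [hf.invFun_eq_orderIsoOfSurjective_symm hsurj]
  exact OrderIso.continuous _

theorem StrictMono.hasDerivAt_invFun {f : ℝ → ℝ} {f' y : ℝ} (hf : StrictMono f)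
    (hsurj : Surjective f) (hderiv : HasDerivAt f f' (invFun f y)) (hf' : f' ≠ 0) :
    HasDerivAt (invFun f) f'⁻¹ y :=
  hderiv.of_local_left_inverse (hf.continuous_invFun hsurj).continuousAt hf'
    (Eventually.of_forall (rightInverse_invFun hsurj))

end StrictMonoInverse

section PrimitiveOfNonneg

variable {f : ℝ → ℝ} {a : ℝ}

theorem monotone_intervalIntegral_of_nonneg (hf : Continuous f) (hf0 : ∀ x, 0 ≤ f x) :
    Monotone fun x => ∫ t in a..x, f t := by
  intro x y hxy
  have hsplit := intervalIntegral.integral_interval_sub_left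
    (hf.intervalIntegrable (μ := volume) a y) (hf.intervalIntegrable a x)
  have hnonneg : 0 ≤ ∫ t in x..y, f t := intervalIntegral.integral_nonneg hxy fun t _ => hf0 t
  dsimp only
  linarith

theorem tendsto_intervalIntegral_atTop_of_not_integrableOn_Ioi (hf : Continuous f)
    (hf0 : ∀ x, 0 ≤ f x) (hni : ¬ IntegrableOn f (Ioi a)) :
    Tendsto (fun x => ∫ t in a..x, f t) atTop atTop := by
  refine tendsto_atTop_atTop_of_monotone (monotone_intervalIntegral_of_nonneg hf hf0) fun M => ?_
  by_contra! hM
  refine hni (integrableOn_Ioi_of_intervalIntegral_norm_bounded M a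
    (fun x => (hf.intervalIntegrable a x).1) tendsto_id (Eventually.of_forall fun x => ?_))
  simp only [Real.norm_of_nonneg (hf0 _)]
  exact (hM x).le

theorem tendsto_intervalIntegral_atBot_of_not_integrableOn_Iio (hf : Continuous f)
    (hf0 : ∀ x, 0 ≤ f x) (hni : ¬ IntegrableOn f (Iio a)) :
    Tendsto (fun x => ∫ t in a..x, f t) atBot atBot := by
  refine tendsto_atBot_atBot_of_monotone (monotone_intervalIntegral_of_nonneg hf hf0) fun M => ?_
  by_contra! hM
  refine hni (IntegrableOn.mono_set ?_ Iio_subset_Iic_self)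
  refine integrableOn_Iic_of_intervalIntegral_norm_bounded (-M) a
    (fun x => (hf.intervalIntegrable x a).1) tendsto_id (Eventually.of_forall fun x => ?_)
  simp only [Real.norm_of_nonneg (hf0 _)]
  rw [intervalIntegral.integral_symm]
  linarith [hM x]

end PrimitiveOfNonneg

section PW

variable {w : ℝ → ℝ}

theorem hasDerivAt_pW (hw : Continuous w) (hw0 : ∀ ξ, w ξ ≠ 0) (ξ : ℝ) :
    HasDerivAt (pW w) (w ξ)⁻¹ ξ :=
  intervalIntegral.integral_hasDerivAt_right ((hw.inv₀ hw0).intervalIntegrable 0 ξ)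
    ((hw.inv₀ hw0).stronglyMeasurableAtFilter _ _) (hw.inv₀ hw0).continuousAt

theorem continuous_pW (hw : Continuous w) (hw0 : ∀ ξ, w ξ ≠ 0) : Continuous (pW w) :=
  continuous_iff_continuousAt.2 fun ξ => (hasDerivAt_pW hw hw0 ξ).continuousAt

theorem strictMono_pW (hw : Continuous w) (hpos : ∀ ξ, 0 < w ξ) : StrictMono (pW w) :=
  strictMono_of_hasDerivAt_pos (hasDerivAt_pW hw fun ξ => (hpos ξ).ne')
    fun ξ => inv_pos.2 (hpos ξ)

theorem surjective_pW (hw : Continuous w) (hpos : ∀ ξ, 0 < w ξ)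
    (hni_neg : ¬ IntegrableOn (fun ζ => (w ζ)⁻¹) (Iio 0))
    (hni_pos : ¬ IntegrableOn (fun ζ => (w ζ)⁻¹) (Ioi 0)) : Surjective (pW w) := by
  have hwinv : Continuous fun ζ => (w ζ)⁻¹ := hw.inv₀ fun ξ => (hpos ξ).ne'
  have hwinv0 : ∀ ζ, 0 ≤ (w ζ)⁻¹ := fun ζ => (inv_pos.2 (hpos ζ)).le
  exact (continuous_pW hw fun ξ => (hpos ξ).ne').surjective
    (tendsto_intervalIntegral_atTop_of_not_integrableOn_Ioi hwinv hwinv0 hni_pos)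
    (tendsto_intervalIntegral_atBot_of_not_integrableOn_Iio hwinv hwinv0 hni_neg)

theorem hasDerivAt_invFun_pW (hw : Continuous w) (hpos : ∀ ξ, 0 < w ξ)
    (hsurj : Surjective (pW w)) (y : ℝ) :
    HasDerivAt (invFun (pW w)) (w (invFun (pW w) y)) y := by
  simpa only [inv_inv] using (strictMono_pW hw hpos).hasDerivAt_invFun hsurj
    (hasDerivAt_pW hw (fun ξ => (hpos ξ).ne') _) (inv_ne_zero (hpos _).ne')

theorem add_muW (w : ℝ → ℝ) (ξ t : ℝ) : ξ + muW w ξ t = invFun (pW w) (pW w ξ + t) :=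
  add_sub_cancel ξ _

theorem hasDerivAt_muW_fst (hw : Continuous w) (hpos : ∀ ξ, 0 < w ξ)
    (hsurj : Surjective (pW w)) (ξ t : ℝ) :
    HasDerivAt (fun a => muW w a t) (w (ξ + muW w ξ t) / w ξ - 1) ξ := by
  rw [add_muW, div_eq_mul_inv]
  exact ((hasDerivAt_invFun_pW hw hpos hsurj _).comp ξ
    ((hasDerivAt_pW hw (fun ξ => (hpos ξ).ne') ξ).add_const t)).sub (hasDerivAt_id ξ)

theorem hasDerivAt_muW_snd (hw : Continuous w) (hpos : ∀ ξ, 0 < w ξ)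
    (hsurj : Surjective (pW w)) (ξ t : ℝ) :
    HasDerivAt (fun s => muW w ξ s) (w (ξ + muW w ξ t)) t := by
  rw [add_muW]
  have hcomp := (hasDerivAt_invFun_pW hw hpos hsurj _).comp t
    ((hasDerivAt_id' t).const_add (pW w ξ))
  rw [mul_one] at hcomp
  exact hcomp.sub_const ξ

theorem continuous_add_muW (hw : Continuous w) (hpos : ∀ ξ, 0 < w ξ)
    (hsurj : Surjective (pW w)) : Continuous fun q : ℝ × ℝ => q.1 + muW w q.1 q.2 := by
  simp only [add_muW]
  exact ((strictMono_pW hw hpos).continuous_invFun hsurj).comp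
    (((continuous_pW hw fun ξ => (hpos ξ).ne').comp continuous_fst).add continuous_snd)

end PW

theorem stmt_8 (w : ℝ → ℝ) (hw_cont : Continuous w) (hw_pos : ∀ ξ, 0 < w ξ)
    (hni_neg : ¬ IntegrableOn (fun ζ => (w ζ)⁻¹) (Set.Iio 0))
    (hni_pos : ¬ IntegrableOn (fun ζ => (w ζ)⁻¹) (Set.Ioi 0)) :
    (∀ ξ t : ℝ, 0 ≤ t →
      HasDerivAt (fun a => muW w a t) (w (ξ + muW w ξ t) / w ξ - 1) ξ) ∧
    (∀ ξ t : ℝ, 0 ≤ t →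
      HasDerivWithinAt (fun s => muW w ξ s) (w (ξ + muW w ξ t)) (Set.Ici 0) t) ∧
    ContinuousOn (fun q : ℝ × ℝ => w (q.1 + muW w q.1 q.2) / w q.1 - 1)
      (Set.univ ×ˢ Set.Ici (0:ℝ)) ∧
    ContinuousOn (fun q : ℝ × ℝ => w (q.1 + muW w q.1 q.2))
      (Set.univ ×ˢ Set.Ici (0:ℝ)) := by
  have hsurj := surjective_pW hw_cont hw_pos hni_neg hni_pos
  have hcont : Continuous fun q : ℝ × ℝ => w (q.1 + muW w q.1 q.2) :=
    hw_cont.comp (continuous_add_muW hw_cont hw_pos hsurj)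
  refine ⟨fun ξ t _ => hasDerivAt_muW_fst hw_cont hw_pos hsurj ξ t,
    fun ξ t _ => (hasDerivAt_muW_snd hw_cont hw_pos hsurj ξ t).hasDerivWithinAt, ?_,
    hcont.continuousOn⟩
  exact ((hcont.div (hw_cont.comp continuous_fst) fun q => (hw_pos q.1).ne').sub
    continuous_const).continuousOn
end

section
/- Let w : ℝ → (0,∞) be continuous with 1/w not Lebesgue-integrable on (−∞,0) and not Lebesgue-integrable on (0,∞), and define for t ∈ ℝ the operator T_w(t) on L²_w(ℝ) by (T_w(t)x)(ξ) = (w(ξ+μ_w(ξ,t))/w(ξ))·x(ξ+μ_w(ξ,t)). Then T_w(0) is the identity on L²_w(ℝ) and T_w(t)∘T_w(s) = T_w(t+s) for all s, t ∈ ℝ; in particular each T_w(t) is bijective with inverse T_w(−t). -/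
open MeasureTheory Filter Set Topology

/-- `(T_w(t)x)(ξ) = (w(ξ+μ_w(ξ,t))/w(ξ)) · x(ξ+μ_w(ξ,t))`. -/
noncomputable def Tw (w : ℝ → ℝ) (t : ℝ) (x : ℝ → ℂ) (ξ : ℝ) : ℂ :=
  ((w (ξ + muW w ξ t) / w ξ : ℝ) : ℂ) * x (ξ + muW w ξ t)

theorem stmt_11 (w : ℝ → ℝ) (hw_cont : Continuous w) (hw_pos : ∀ ξ, 0 < w ξ)
    (hni_neg : ¬ IntegrableOn (fun ζ => (w ζ)⁻¹) (Set.Iio 0))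
    (hni_pos : ¬ IntegrableOn (fun ζ => (w ζ)⁻¹) (Set.Ioi 0)) :
    (∀ x : ℝ → ℂ, ∀ ξ : ℝ, Tw w 0 x ξ = x ξ) ∧
    (∀ s t : ℝ, ∀ x : ℝ → ℂ, ∀ ξ : ℝ, Tw w t (Tw w s x) ξ = Tw w (t + s) x ξ) ∧
    (∀ t : ℝ, ∀ x : ℝ → ℂ, ∀ ξ : ℝ,
      Tw w t (Tw w (-t) x) ξ = x ξ ∧ Tw w (-t) (Tw w t x) ξ = x ξ) := by
  have hwc : Continuous fun ζ => (w ζ)⁻¹ := hw_cont.inv₀ fun ζ => (hw_pos ζ).ne'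
  have hwpos : ∀ ζ, 0 < (w ζ)⁻¹ := fun ζ => inv_pos.mpr (hw_pos ζ)
  have hInt : ∀ a b : ℝ, IntervalIntegrable (fun ζ => (w ζ)⁻¹) volume a b :=
    fun a b => hwc.intervalIntegrable a b
  set f := pW w with hf
  -- strict monotonicity
  have hmono : StrictMono f := by
    intro a b hab
    have : f b - f a = ∫ ζ in a..b, (w ζ)⁻¹ := by
      rw [hf]; unfold pW
      rw [← intervalIntegral.integral_add_adjacent_intervals (hInt 0 a) (hInt a b)]
      ring
    have hpos := intervalIntegral.intervalIntegral_pos_of_pos (hInt a b) hwpos hab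
    linarith
  have hinj : Function.Injective f := hmono.injective
  -- continuity
  have hcont : Continuous f := intervalIntegral.continuous_primitive hInt 0
  -- nonneg of integral for a ≤ b
  have hione : ∀ a b : ℝ, a ≤ b → 0 ≤ ∫ ζ in a..b, (w ζ)⁻¹ :=
    fun a b hab => intervalIntegral.integral_nonneg hab (fun u _ => (hwpos u).le)
  -- unbounded above
  have hub : ∀ M : ℝ, ∃ ξ, M ≤ f ξ := by
    intro M
    by_contra h
    push_neg at h
    apply hni_pos
    refine integrableOn_Ioi_of_intervalIntegral_norm_bounded (max M 0) 0
      (fun n : ℕ => (hInt 0 n).1) tendsto_natCast_atTop_atTop ?_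
    · filter_upwards with n
      have h1 : (∫ ζ in (0:ℝ)..(n:ℝ), ‖(w ζ)⁻¹‖) = ∫ ζ in (0:ℝ)..(n:ℝ), (w ζ)⁻¹ := by
        congr 1; ext ζ; exact Real.norm_of_nonneg (hwpos ζ).le
      rw [h1]
      exact le_max_of_le_left (h n).le
  -- unbounded below
  have hlb : ∀ M : ℝ, ∃ ξ, f ξ ≤ M := by
    intro M
    by_contra h
    push_neg at h
    apply hni_neg
    have hIic : IntegrableOn (fun ζ => (w ζ)⁻¹) (Iic 0) := by
      refine integrableOn_Iic_of_intervalIntegral_norm_bounded (l := atTop) (max (-M) 0) 0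
        (fun n : ℕ => (hInt (-(n:ℝ)) 0).1) ?_ ?_
      · exact tendsto_neg_atBot_iff.mpr tendsto_natCast_atTop_atTop
      · filter_upwards with n
        have h1 : (∫ ζ in (-(n:ℝ))..(0:ℝ), ‖(w ζ)⁻¹‖) = ∫ ζ in (-(n:ℝ))..(0:ℝ), (w ζ)⁻¹ := by
          congr 1; ext ζ; exact Real.norm_of_nonneg (hwpos ζ).le
        have h2 : (∫ ζ in (-(n:ℝ))..(0:ℝ), (w ζ)⁻¹) = f 0 - f (-(n:ℝ)) := by
          rw [hf]; unfold pW
          rw [← intervalIntegral.integral_add_adjacent_intervals (hInt 0 (-(n:ℝ)))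
            (hInt (-(n:ℝ)) 0)]
          simp
        have h3 : f 0 = 0 := by rw [hf]; unfold pW; simp
        have h4 := h (-(n:ℝ))
        rw [h1, h2, h3]
        have : -f (-(n:ℝ)) ≤ -M := by linarith
        exact le_max_of_le_left (by linarith)
    exact hIic.mono_set Iio_subset_Iic_self
  -- surjectivity
  have hsurj : Function.Surjective f := by
    intro y
    obtain ⟨a, ha⟩ := hlb y
    obtain ⟨b, hb⟩ := hub y
    have hab : a ≤ b := by
      by_contra hc
      push_neg at hc
      exact absurd (hmono hc) (by linarith)
    have := intermediate_value_Icc hab hcont.continuousOn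
    obtain ⟨ξ, _, hξ⟩ := this ⟨ha, hb⟩
    exact ⟨ξ, hξ⟩
  have hg : ∀ y, f (Function.invFun f y) = y := fun y => Function.rightInverse_invFun hsurj y
  have hgl : ∀ ξ, Function.invFun f (f ξ) = ξ := fun ξ => Function.leftInverse_invFun hinj ξ
  have key : ∀ ξ t : ℝ, ξ + muW w ξ t = Function.invFun f (f ξ + t) := by
    intro ξ t
    show ξ + (Function.invFun (pW w) (pW w ξ + t) - ξ) = _
    rw [← hf]; ring
  have part1 : ∀ x : ℝ → ℂ, ∀ ξ : ℝ, Tw w 0 x ξ = x ξ := by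
    intro x ξ
    have h0 : ξ + muW w ξ 0 = ξ := by rw [key]; simpa using hgl ξ
    simp [Tw, h0, div_self (hw_pos ξ).ne']
  have part2 : ∀ s t : ℝ, ∀ x : ℝ → ℂ, ∀ ξ : ℝ,
      Tw w t (Tw w s x) ξ = Tw w (t + s) x ξ := by
    intro s t x ξ
    have hη2 : (ξ + muW w ξ t) + muW w (ξ + muW w ξ t) s = ξ + muW w ξ (t + s) := by
      rw [key ξ t, key, hg, key ξ (t + s), add_assoc]
    simp only [Tw, hη2]
    have hξ : (w ξ : ℂ) ≠ 0 := Complex.ofReal_ne_zero.mpr (hw_pos ξ).ne'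
    have hη : (w (ξ + muW w ξ t) : ℂ) ≠ 0 := Complex.ofReal_ne_zero.mpr (hw_pos _).ne'
    push_cast
    field_simp
  refine ⟨part1, part2, fun t x ξ => ⟨?_, ?_⟩⟩
  · rw [part2, add_neg_cancel, part1]
  · rw [part2, neg_add_cancel, part1]
end
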